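/- Let (D_t) = (𝔸_{r(t)}) be a canonical domain system and (f_t) a Loewner chain over (D_t). Then for every compact set K ⊂ 𝒟 := {(z,t) : t ≥ 0, z ∈ D_t} there exists M = M(K) > 0 such that |ζ − z| ≤ M·|f_t(ζ) − f_t(z)| whenever (z,t) ∈ K and (ζ,t) ∈ K. -/

import Mathlib

open MeasureTheory Set Filter Metric
open scoped ENNReal NNReal Topology

noncomputable section

/-- The annulus `𝔸_r = {z : r < |z| < 1}`.  For `r = 0` this is the punctured
unit disk `𝔻*`. -/
def stdAnnulus (r : ℝ) : Set ℂ := {z : ℂ | r < ‖z‖ ∧ ‖z‖ < 1}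

/-- The exterior of the closed unit disk, `ℂ ∖ cl 𝔻`. -/
def extDisk : Set ℂ := {z : ℂ | 1 < ‖z‖}

/-- The punctured plane `ℂ* = ℂ ∖ {0}`. -/
def punctPlane : Set ℂ := {z : ℂ | z ≠ 0}

/-- `ω(r) = -π / log r` for `r ∈ (0,1)`, and `ω(0) = 0`. -/
def omegaFun (r : ℝ) : ℝ := if r = 0 then 0 else -Real.pi / Real.log r

/-- `f ∈ AC^d([0,∞))`: `f` is locally absolutely continuous on `[0,∞)` with
(a.e.) derivative of class `L^d_loc`; the derivative is represented by a
function `g` via the fundamental theorem of calculus. -/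
def ACd (d : ℝ≥0∞) (f : ℝ → ℝ) : Prop :=
  ∃ g : ℝ → ℝ,
    (∀ T : ℝ, 0 < T → MemLp g d (volume.restrict (Icc (0:ℝ) T))) ∧
    ∀ a b : ℝ, 0 ≤ a → a ≤ b → f b - f a = ∫ t in a..b, g t

/-- A (doubly connected) canonical domain system of order `d`: a family of
annuli `D_t = 𝔸_{r t}` such that `t ↦ ω(r t)` is non-increasing and of class
`AC^d` on `[0,∞)`. -/
structure CanonicalDomainSystem (d : ℝ≥0∞) where
  r : ℝ → ℝ
  r_nonneg : ∀ t : ℝ, 0 ≤ t → 0 ≤ r t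
  r_lt_one : ∀ t : ℝ, 0 ≤ t → r t < 1
  omega_anti : ∀ ⦃s t : ℝ⦄, 0 ≤ s → s ≤ t → omegaFun (r t) ≤ omegaFun (r s)
  omega_ACd : ACd d fun t => omegaFun (r t)

/-- A Loewner chain of order `d` over the canonical domain system `D`. -/
structure IsLoewnerChain (d : ℝ≥0∞) (D : CanonicalDomainSystem d) (f : ℝ → ℂ → ℂ) : Prop where
  holo : ∀ t : ℝ, 0 ≤ t → DifferentiableOn ℂ (f t) (stdAnnulus (D.r t))
  inj : ∀ t : ℝ, 0 ≤ t → InjOn (f t) (stdAnnulus (D.r t))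
  mono : ∀ ⦃s t : ℝ⦄, 0 ≤ s → s ≤ t →
    f s '' stdAnnulus (D.r s) ⊆ f t '' stdAnnulus (D.r t)
  lc3 : ∀ S T : ℝ, 0 ≤ S → S ≤ T → ∀ K : Set ℂ, IsCompact K → K ⊆ stdAnnulus (D.r S) →
    ∃ k : ℝ → ℝ, (∀ x, 0 ≤ k x) ∧ MemLp k d (volume.restrict (Icc S T)) ∧
      ∀ z ∈ K, ∀ s t : ℝ, S ≤ s → s ≤ t → t ≤ T →
        ‖f s z - f t z‖ ≤ ∫ ξ in s..t, k ξ

/-- An evolution family of order `d` over the canonical domain system `D`. -/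
structure IsEvolutionFamily (d : ℝ≥0∞) (D : CanonicalDomainSystem d)
    (φ : ℝ → ℝ → ℂ → ℂ) : Prop where
  holo : ∀ ⦃s t : ℝ⦄, 0 ≤ s → s ≤ t → DifferentiableOn ℂ (φ s t) (stdAnnulus (D.r s))
  mapsTo : ∀ ⦃s t : ℝ⦄, 0 ≤ s → s ≤ t →
    MapsTo (φ s t) (stdAnnulus (D.r s)) (stdAnnulus (D.r t))
  ef1 : ∀ s : ℝ, 0 ≤ s → ∀ z ∈ stdAnnulus (D.r s), φ s s z = z
  ef2 : ∀ ⦃s u t : ℝ⦄, 0 ≤ s → s ≤ u → u ≤ t → ∀ z ∈ stdAnnulus (D.r s),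
    φ s t z = φ u t (φ s u z)
  ef3 : ∀ S T : ℝ, 0 ≤ S → S ≤ T → ∀ z ∈ stdAnnulus (D.r S),
    ∃ k : ℝ → ℝ, (∀ x, 0 ≤ k x) ∧ MemLp k d (volume.restrict (Icc S T)) ∧
      ∀ s u t : ℝ, S ≤ s → s ≤ u → u ≤ t → t ≤ T →
        ‖φ s u z - φ s t z‖ ≤ ∫ ξ in u..t, k ξ

/-- The domain `𝒟 = {(z,t) : t ≥ 0, z ∈ D_t}` of a weak holomorphic vector field. -/
def vfDomain {d : ℝ≥0∞} (D : CanonicalDomainSystem d) : Set (ℂ × ℝ) :=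
  {p : ℂ × ℝ | 0 ≤ p.2 ∧ p.1 ∈ stdAnnulus (D.r p.2)}

/-- A weak holomorphic vector field of order `d` over `D` (we regard `G` as a
function of `(z, t)` written `G z t`). -/
structure IsWeakHolVF (d : ℝ≥0∞) (D : CanonicalDomainSystem d) (G : ℂ → ℝ → ℂ) : Prop where
  meas : ∀ z : ℂ, Measurable fun t : {t : ℝ // 0 ≤ t ∧ z ∈ stdAnnulus (D.r t)} => G z t.1
  holo : ∀ t : ℝ, 0 ≤ t → DifferentiableOn ℂ (fun z => G z t) (stdAnnulus (D.r t))
  bound : ∀ K : Set (ℂ × ℝ), IsCompact K → K ⊆ vfDomain D →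
    ∃ k : ℝ → ℝ, (∀ x, 0 ≤ k x) ∧ MemLp k d (volume.restrict (Prod.snd '' K)) ∧
      ∀ p ∈ K, ‖G p.1 p.2‖ ≤ k p.2

/-- `G` is semicomplete: for every initial condition the Carathéodory initial
value problem (in integral form) has a solution defined on all of `[s,∞)`. -/
def IsSemicomplete {d : ℝ≥0∞} (D : CanonicalDomainSystem d) (G : ℂ → ℝ → ℂ) : Prop :=
  ∀ s : ℝ, 0 ≤ s → ∀ z ∈ stdAnnulus (D.r s),
    ∃ w : ℝ → ℂ, w s = z ∧ (∀ t : ℝ, s ≤ t → w t ∈ stdAnnulus (D.r t)) ∧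
      ∀ t : ℝ, s ≤ t → w t = z + ∫ ξ in s..t, G (w ξ) ξ

/-- `γ` is a closed curve (parametrized by `[0,1]`) contained in `A`. -/
def IsClosedCurveIn (γ : ℝ → ℂ) (A : Set ℂ) : Prop :=
  ContinuousOn γ (Icc 0 1) ∧ γ 0 = γ 1 ∧ ∀ t ∈ Icc (0:ℝ) 1, γ t ∈ A

/-- The closed curve `γ` has index (winding number) `n` about the point `w`,
expressed via a continuous logarithm of `γ - w`. -/
def HasWindingNumber (γ : ℝ → ℂ) (w : ℂ) (n : ℤ) : Prop :=
  ∃ g : ℝ → ℂ, ContinuousOn g (Icc 0 1) ∧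
    (∀ t ∈ Icc (0:ℝ) 1, γ t - w = Complex.exp (g t)) ∧
    g 1 - g 0 = 2 * Real.pi * Complex.I * n

/-- `I(f ∘ γ) = I(γ)` for every closed curve `γ` in `A`: `f` preserves the
index about the origin of closed curves in `A`. -/
def PreservesWinding (f : ℂ → ℂ) (A : Set ℂ) : Prop :=
  ∀ γ : ℝ → ℂ, IsClosedCurveIn γ A → ∀ n : ℤ,
    (HasWindingNumber γ 0 n ↔ HasWindingNumber (fun t => f (γ t)) 0 n)

/-- The Loewner chain `f` is associated with the evolution family `φ`:
`f_s = f_t ∘ φ_{s,t}`. -/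
def AssociatedLC {d : ℝ≥0∞} (D : CanonicalDomainSystem d) (f : ℝ → ℂ → ℂ)
    (φ : ℝ → ℝ → ℂ → ℂ) : Prop :=
  ∀ s t : ℝ, 0 ≤ s → s ≤ t → ∀ z ∈ stdAnnulus (D.r s), f s z = f t (φ s t z)

/-- The union `⋃_{t ≥ 0} f_t(D_t)` of the ranges of a Loewner chain. -/
def chainUnion {d : ℝ≥0∞} (D : CanonicalDomainSystem d) (f : ℝ → ℂ → ℂ) : Set ℂ :=
  ⋃ t ∈ Ici (0:ℝ), f t '' stdAnnulus (D.r t)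

/-- The evolution family `φ` has Loewner range `Ω`, i.e. there is an associated
Loewner chain, preserving winding numbers, whose union of ranges is `Ω`.
(Taking `Ω = 𝔸_ρ`, `𝔻*`, `ℂ ∖ cl 𝔻`, `ℂ*`, this defines the conformal types
I, II, III, IV respectively.) -/
def HasConformalType {d : ℝ≥0∞} (D : CanonicalDomainSystem d) (φ : ℝ → ℝ → ℂ → ℂ)
    (Ω : Set ℂ) : Prop :=
  ∃ f : ℝ → ℂ → ℂ, IsLoewnerChain d D f ∧ AssociatedLC D f φ ∧
    (∀ t : ℝ, 0 ≤ t → PreservesWinding (f t) (stdAnnulus (D.r t))) ∧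
    chainUnion D f = Ω

/-- `φ s t → 0` as `t → +∞`, uniformly on compact subsets of `D_s`. -/
def ConvergesToZeroOnCompacta {d : ℝ≥0∞} (D : CanonicalDomainSystem d)
    (φ : ℝ → ℝ → ℂ → ℂ) (s : ℝ) : Prop :=
  ∀ K : Set ℂ, IsCompact K → K ⊆ stdAnnulus (D.r s) →
    TendstoUniformlyOn (fun t z => φ s t z) (fun _ => 0) atTop K

/-- `N(f)`: the free term of the Laurent expansion of `f`, holomorphic on the
annulus `𝔸_r`, computed as a mean value over the circle of radius `(1+r)/2`. -/
def freeTerm (r : ℝ) (f : ℂ → ℂ) : ℂ :=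
  (2 * Real.pi : ℂ)⁻¹ *
    ∫ θ in (0:ℝ)..(2 * Real.pi), f ((((1 + r) / 2 : ℝ) : ℂ) * Complex.exp (θ * Complex.I))

/-- The Villat kernel `K_r`. -/
def villatKernel (r : ℝ) (z : ℂ) : ℂ :=
  (1 + z) / (1 - z) +
    ∑' ν : ℕ,
      ((1 + (r : ℂ) ^ (2 * (ν + 1)) * z) / (1 - (r : ℂ) ^ (2 * (ν + 1)) * z) +
        (1 + z / (r : ℂ) ^ (2 * (ν + 1))) / (1 - z / (r : ℂ) ^ (2 * (ν + 1))))

/-- The class `V_r`: for `r ∈ (0,1)`, holomorphic functions on `𝔸_r` given by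
the Villat-kernel representation with a pair of positive Borel measures on the
unit circle of total mass one; for `r = 0`, the (normalized) Carathéodory class
on the unit disk. -/
def MemClassV (r : ℝ) (p : ℂ → ℂ) : Prop :=
  (r = 0 →
    DifferentiableOn ℂ p (ball (0:ℂ) 1) ∧ p 0 = 1 ∧ ∀ z ∈ ball (0:ℂ) 1, 0 < (p z).re) ∧
  (r ≠ 0 →
    DifferentiableOn ℂ p (stdAnnulus r) ∧
    ∃ μ₁ μ₂ : Measure ℂ,
      μ₁ {ξ : ℂ | ‖ξ‖ ≠ 1} = 0 ∧ μ₂ {ξ : ℂ | ‖ξ‖ ≠ 1} = 0 ∧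
      μ₁ univ + μ₂ univ = 1 ∧
      ∀ z ∈ stdAnnulus r,
        p z = (∫ ξ, villatKernel r (z / ξ) ∂μ₁) +
          ∫ ξ, (1 - villatKernel r ((r : ℂ) * ξ / z)) ∂μ₂)

/-! Near a diagonal point `(z₀, t₀)` of `𝒟`, (LC3) and the continuity of `t ↦ r t` make `f_s`
converge to `f_{t₀}` uniformly near `z₀` as `s → t₀`, hence (Weierstrass) also `f_s'` to `f_{t₀}'`.
Since `f_{t₀}'(z₀) ≠ 0` by injectivity, the mean value inequality gives
`‖ζ - z‖ ≤ (2 / |f_{t₀}'(z₀)|) ‖f_s ζ - f_s z‖` for `s` near `t₀` and `z, ζ` near `z₀`. Off the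
diagonal, `‖f_t ζ - f_t z‖` is jointly continuous and positive. Compactness of the set of pairs
`((z, t), (ζ, t))` in `K × K` turns these local bounds into a global one. -/

theorem IsCompact.exists_pos_forall_le_mul {X : Type*} [TopologicalSpace X] {s : Set X}
    (hs : IsCompact s) {A B : X → ℝ} (hB : ∀ x ∈ s, 0 ≤ B x)
    (hloc : ∀ x ∈ s, ∃ c, ∀ᶠ y in 𝓝[s] x, A y ≤ c * B y) :
    ∃ M > 0, ∀ x ∈ s, A x ≤ M * B x := by
  have hle : ∀ {M M' : ℝ} {x}, x ∈ s → M ≤ M' → A x ≤ M * B x → A x ≤ M' * B x :=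
    fun hx hM h => h.trans (mul_le_mul_of_nonneg_right hM (hB _ hx))
  have key : ∃ M > 0, ∀ x ∈ s ∩ s, A x ≤ M * B x := by
    refine hs.induction_on (p := fun t => ∃ M > 0, ∀ x ∈ t ∩ s, A x ≤ M * B x)
      ⟨1, one_pos, by simp⟩ ?_ ?_ ?_
    · rintro t₁ t₂ ht ⟨M, hM, h⟩
      exact ⟨M, hM, fun x hx => h x ⟨ht hx.1, hx.2⟩⟩
    · rintro t₁ t₂ ⟨M₁, hM₁, h₁⟩ ⟨M₂, hM₂, h₂⟩
      refine ⟨max M₁ M₂, lt_max_of_lt_left hM₁, fun x ⟨hx, hxs⟩ => ?_⟩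
      rcases hx with hx | hx
      · exact hle hxs (le_max_left _ _) (h₁ x ⟨hx, hxs⟩)
      · exact hle hxs (le_max_right _ _) (h₂ x ⟨hx, hxs⟩)
    · intro x hx
      obtain ⟨c, hc⟩ := hloc x hx
      exact ⟨_, hc, max c 1, one_pos.trans_le (le_max_right _ _),
        fun y ⟨hy, hys⟩ => hle hys (le_max_left _ _) hy⟩
  simpa only [inter_self] using key

open Complex in
theorem AnalyticAt.exists_pow_eq {h : ℂ → ℂ} {a : ℂ} (hh : AnalyticAt ℂ h a) (ha : h a ≠ 0)
    {n : ℕ} (hn : n ≠ 0) :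
    ∃ q : ℂ → ℂ, AnalyticAt ℂ q a ∧ q a ≠ 0 ∧ ∀ z, q z ^ n = h z := by
  refine ⟨fun z => h a ^ (n⁻¹ : ℂ) * (h z / h a) ^ (n⁻¹ : ℂ), ?_, ?_, fun z => ?_⟩
  · exact analyticAt_const.mul
      ((hh.div analyticAt_const ha).cpow analyticAt_const (by simp [ha, one_mem_slitPlane]))
  · simp [ha]
  · rw [mul_pow, cpow_nat_inv_pow _ hn, cpow_nat_inv_pow _ hn, mul_div_cancel₀ _ ha]

theorem AnalyticAt.not_injOn_pow {φ : ℂ → ℂ} {a : ℂ} (hφ : AnalyticAt ℂ φ a) (hφa : φ a = 0)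
    (hφc : ¬ ∀ᶠ z in 𝓝 a, φ z = 0) {n : ℕ} (hn : 2 ≤ n) {s : Set ℂ} (hs : s ∈ 𝓝 a) :
    ¬ InjOn (fun z => φ z ^ n) s := by
  intro hinj
  have hmap : 𝓝 0 ≤ map φ (𝓝 a) := by
    simpa [hφa] using hφ.eventually_constant_or_nhds_le_map_nhds.resolve_left (by rwa [hφa])
  obtain ⟨ε, hε, hball⟩ := Metric.mem_nhds_iff.mp (hmap (image_mem_map hs))
  have hu := Complex.isPrimitiveRoot_exp n (by omega)
  set u := Complex.exp (2 * Real.pi * Complex.I / n)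
  set w : ℂ := ((ε / 2 : ℝ) : ℂ)
  have hw : ‖w‖ = ε / 2 := by simp [w, abs_of_pos hε]
  obtain ⟨z₁, hz₁, hφz₁⟩ := hball (show w ∈ ball 0 ε by simp [hw, hε])
  obtain ⟨z₂, hz₂, hφz₂⟩ := hball (show w * u ∈ ball 0 ε by
    simp [hw, hu.norm'_eq_one (by omega), hε])
  have hz : z₁ = z₂ := hinj hz₁ hz₂ (by simp only [hφz₁, hφz₂, mul_pow, hu.pow_eq_one, mul_one])
  have hw0 : w ≠ 0 := norm_pos_iff.mp (by rw [hw]; positivity)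
  exact hu.ne_one (by omega) (mul_left_cancel₀ hw0 (by rw [mul_one, ← hφz₂, ← hz, hφz₁]))

theorem AnalyticAt.deriv_ne_zero_of_injOn {f : ℂ → ℂ} {a : ℂ} (hf : AnalyticAt ℂ f a)
    {s : Set ℂ} (hs : s ∈ 𝓝 a) (hinj : InjOn f s) : deriv f a ≠ 0 := by
  intro hfa
  have hnc : ¬ ∀ᶠ z in 𝓝 a, f z - f a = 0 := fun hev => by
    have hloc : ∀ᶠ z in 𝓝 a, z = a := by
      filter_upwards [hev, hs] with z hz hzs
      exact hinj hzs (mem_of_mem_nhds hs) (sub_eq_zero.mp hz)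
    obtain ⟨z, hz, hza⟩ := ((hloc.filter_mono nhdsWithin_le_nhds).and
      (self_mem_nhdsWithin (s := {a}ᶜ))).exists
    exact hza hz
  obtain ⟨n, h, hh, hha, hfh⟩ :=
    (hf.fun_sub analyticAt_const).exists_eventuallyEq_pow_smul_nonzero_iff.mpr hnc
  have hn0 : n ≠ 0 := by
    rintro rfl
    simpa [eq_comm, hha] using hfh.self_of_nhds
  have hn1 : n ≠ 1 := by
    rintro rfl
    have hderiv : HasDerivAt (fun z => (z - a) ^ 1 • h z) (h a) a := by
      simpa using ((hasDerivAt_id a).sub_const a).fun_mul hh.differentiableAt.hasDerivAt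
    have hfd : HasDerivAt f (h a) a :=
      (hasDerivAt_sub_const_iff (f a)).mp (hderiv.congr_of_eventuallyEq hfh)
    exact hha (hfd.deriv.symm.trans hfa)
  obtain ⟨q, hq, hqa, hqh⟩ := hh.exists_pow_eq hha hn0
  have hφ : AnalyticAt ℂ (fun z => (z - a) * q z) a := (analyticAt_id.sub analyticAt_const).mul hq
  have hfφ : ∀ᶠ z in 𝓝 a, f z = f a + ((z - a) * q z) ^ n := by
    filter_upwards [hfh] with z hz
    rw [mul_pow, hqh, ← smul_eq_mul, ← hz, add_sub_cancel]
  refine hφ.not_injOn_pow (n := n) (by simp) (fun hev => hnc ?_) (by omega) (inter_mem hs hfφ) ?_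
  · filter_upwards [hfφ, hev] with z hz hφz
    rw [hz, hφz, zero_pow hn0, add_zero, sub_self]
  · intro z hz w hw hzw
    exact hinj hz.1 hw.1 (by rw [hz.2, hw.2]; exact congrArg _ hzw)

theorem Convex.mul_norm_sub_le_norm_image_sub {𝕜 G : Type*} [RCLike 𝕜] [NormedAddCommGroup G]
    [NormedSpace 𝕜 G] {f : 𝕜 → G} {s : Set 𝕜} (hs : Convex ℝ s)
    (hf : ∀ x ∈ s, DifferentiableAt 𝕜 f x) {a : G} {C : ℝ} (hC : ∀ x ∈ s, ‖deriv f x - a‖ ≤ C)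
    {x y : 𝕜} (hx : x ∈ s) (hy : y ∈ s) : (‖a‖ - C) * ‖y - x‖ ≤ ‖f y - f x‖ := by
  have hderiv : ∀ z ∈ s, HasDerivAt (fun w => f w - w • a) (deriv f z - a) z := fun z hz => by
    simpa using (hf z hz).hasDerivAt.fun_sub ((hasDerivAt_id z).smul_const a)
  have hmv := hs.norm_image_sub_le_of_norm_hasDerivWithin_le
    (fun z hz => (hderiv z hz).hasDerivWithinAt) hC hx hy
  have hlin : ‖(y - x) • a‖ = ‖a‖ * ‖y - x‖ := by rw [norm_smul, mul_comm]
  have htri := norm_sub_norm_le ((y - x) • a) (f y - f x)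
  rw [show (y - x) • a - (f y - f x) = -((f y - y • a) - (f x - x • a)) by
    rw [sub_smul]; abel, norm_neg] at htri
  nlinarith

theorem exists_eventually_mul_norm_sub_le_of_tendstoLocallyUniformlyOn {ι : Type*} {p : Filter ι}
    {F : ι → ℂ → ℂ} {g : ℂ → ℂ} {U : Set ℂ} (hF : TendstoLocallyUniformlyOn F g p U)
    (hFd : ∀ᶠ i in p, DifferentiableOn ℂ (F i) U) (hU : IsOpen U) {z₀ : ℂ} (hz₀ : z₀ ∈ U)
    (hg : deriv g z₀ ≠ 0) :
    ∃ ε > 0, ∀ᶠ i in p, ∀ z ∈ closedBall z₀ ε, ∀ ζ ∈ closedBall z₀ ε,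
      ‖deriv g z₀‖ / 2 * ‖ζ - z‖ ≤ ‖F i ζ - F i z‖ := by
  rcases p.eq_or_neBot with rfl | hp
  · exact ⟨1, one_pos, eventually_bot⟩
  set a := deriv g z₀
  have ha : 0 < ‖a‖ / 4 := by have := norm_pos_iff.mpr hg; positivity
  have hcont : ContinuousAt (deriv g) z₀ :=
    ((hF.differentiableOn hFd hU).deriv hU).continuousOn.continuousAt (hU.mem_nhds hz₀)
  obtain ⟨ε, hε, hεU⟩ : ∃ ε > 0, closedBall z₀ ε ⊆ U ∩ deriv g ⁻¹' ball a (‖a‖ / 4) :=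
    nhds_basis_closedBall.mem_iff.mp
      (inter_mem (hU.mem_nhds hz₀) (hcont.preimage_mem_nhds (ball_mem_nhds a ha)))
  have hunif : TendstoUniformlyOn (deriv ∘ F) (deriv g) p (closedBall z₀ ε) :=
    (tendstoLocallyUniformlyOn_iff_forall_isCompact hU).mp (hF.deriv hFd hU) _
      (hεU.trans inter_subset_left) (isCompact_closedBall z₀ ε)
  refine ⟨ε, hε, ?_⟩
  filter_upwards [Metric.tendstoUniformlyOn_iff.mp hunif _ ha, hFd] with i hi hFi z hz ζ hζ
  have hC : ∀ u ∈ closedBall z₀ ε, ‖deriv (F i) u - a‖ ≤ ‖a‖ / 2 := fun u hu => by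
    have h₁ := hi u hu
    have h₂ := (hεU hu).2
    rw [mem_preimage, mem_ball, dist_eq_norm] at h₂
    rw [Function.comp_apply, dist_eq_norm, norm_sub_rev] at h₁
    linarith [norm_sub_le_norm_sub_add_norm_sub (deriv (F i) u) (deriv g u) a]
  have := (convex_closedBall z₀ ε).mul_norm_sub_le_norm_image_sub
    (fun u hu => hFi.differentiableAt (hU.mem_nhds (hεU hu).1)) hC hz hζ
  linarith

theorem strictMonoOn_omegaFun : StrictMonoOn omegaFun (Ico 0 1) := by
  have hω : ∀ x, 0 < x → omegaFun x = Real.pi / -Real.log x := fun x hx => by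
    rw [omegaFun, if_neg hx.ne', div_neg, neg_div]
  intro a ⟨ha0, _⟩ b ⟨_, hb1⟩ hab
  have hb0 : 0 < b := ha0.trans_lt hab
  have hlb := Real.log_neg hb0 hb1
  rw [hω b hb0]
  rcases ha0.eq_or_lt with rfl | ha0
  · rw [omegaFun, if_pos rfl]
    exact div_pos Real.pi_pos (neg_pos.mpr hlb)
  · rw [hω a ha0]
    exact div_lt_div_of_pos_left Real.pi_pos (neg_pos.mpr hlb)
      (neg_lt_neg (Real.log_lt_log ha0 hab))

theorem ACd.continuousOn {d : ℝ≥0∞} (hd : 1 ≤ d) {φ : ℝ → ℝ} (h : ACd d φ) :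
    ContinuousOn φ (Ici 0) := by
  obtain ⟨g, hg, hφg⟩ := h
  intro t (ht : 0 ≤ t)
  have hT : (0 : ℝ) ≤ t + 1 := by linarith
  have hprim : ContinuousOn (fun x => φ 0 + ∫ ξ in (0 : ℝ)..x, g ξ) (Icc 0 (t + 1)) := by
    rw [← uIcc_of_le hT]
    exact continuousOn_const.add (intervalIntegral.continuousOn_primitive_interval
      (by rw [uIcc_of_le hT]; exact (hg (t + 1) (by linarith)).integrable hd))
  refine ((hprim t ⟨ht, by linarith⟩).congr (fun x hx => ?_) ?_).mono_of_mem_nhdsWithin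
    (mem_nhdsWithin.mpr ⟨Iio (t + 1), isOpen_Iio, lt_add_one t, fun x hx => ⟨hx.2, hx.1.le⟩⟩)
  · rw [← hφg 0 x le_rfl hx.1, add_sub_cancel]
  · rw [← hφg 0 t le_rfl ht, add_sub_cancel]

theorem exists_mem_Icc_eventually_le_of_eventually {t₀ : ℝ} (ht₀ : 0 ≤ t₀) {P : ℝ → Prop}
    (hP : ∀ᶠ s in 𝓝[Ici 0] t₀, P s) : ∃ S ∈ Icc 0 t₀, P S ∧ ∀ᶠ s in 𝓝[Ici 0] t₀, S ≤ s := by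
  obtain ⟨u, hu, huP⟩ := mem_nhdsWithin_iff_exists_mem_nhds_inter.mp hP
  obtain ⟨l, hl, hlu⟩ := exists_Ioc_subset_of_mem_nhds hu ⟨t₀ - 1, sub_one_lt t₀⟩
  obtain ⟨m, hlm, hmt⟩ := exists_between hl
  have hSt₀ : max m 0 ≤ t₀ := max_le hmt.le ht₀
  refine ⟨max m 0, ⟨le_max_right _ _, hSt₀⟩,
    huP ⟨hlu ⟨hlm.trans_le (le_max_left _ _), hSt₀⟩, mem_Ici.mpr (le_max_right _ _)⟩, ?_⟩
  filter_upwards [nhdsWithin_le_nhds (lt_mem_nhds hmt), self_mem_nhdsWithin] with s hms (hs : 0 ≤ s)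
  exact max_le hms.le hs

namespace CanonicalDomainSystem

variable {d : ℝ≥0∞} (D : CanonicalDomainSystem d)

theorem eventually_r_lt (hd : 1 ≤ d) {t₀ m : ℝ} (ht₀ : 0 ≤ t₀) (hm : D.r t₀ < m) :
    ∀ᶠ s in 𝓝[Ici 0] t₀, D.r s < m := by
  rcases lt_or_ge m 1 with hm1 | hm1
  · have hr₀ : D.r t₀ ∈ Ico 0 1 := ⟨D.r_nonneg t₀ ht₀, D.r_lt_one t₀ ht₀⟩
    have hmI : m ∈ Ico 0 1 := ⟨hr₀.1.trans hm.le, hm1⟩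
    filter_upwards [(D.omega_ACd.continuousOn hd t₀ ht₀).eventually_lt_const
      (strictMonoOn_omegaFun hr₀ hmI hm), self_mem_nhdsWithin] with s hs (hs0 : 0 ≤ s)
    exact (strictMonoOn_omegaFun.lt_iff_lt ⟨D.r_nonneg s hs0, D.r_lt_one s hs0⟩ hmI).mp hs
  · filter_upwards [self_mem_nhdsWithin] with s (hs : 0 ≤ s)
    exact (D.r_lt_one s hs).trans_le hm1

theorem eventually_subset_stdAnnulus (hd : 1 ≤ d) {t₀ : ℝ} (ht₀ : 0 ≤ t₀) {K : Set ℂ}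
    (hK : IsCompact K) (hKt : K ⊆ stdAnnulus (D.r t₀)) :
    ∀ᶠ s in 𝓝[Ici 0] t₀, K ⊆ stdAnnulus (D.r s) := by
  obtain ⟨m, hm, hmK⟩ := hK.exists_forall_le' continuous_norm.continuousOn fun z hz => (hKt hz).1
  filter_upwards [D.eventually_r_lt hd ht₀ hm] with s hs z hz
  exact ⟨hs.trans_le (hmK z hz), (hKt hz).2⟩

end CanonicalDomainSystem

theorem isOpen_stdAnnulus (r : ℝ) : IsOpen (stdAnnulus r) :=
  (isOpen_lt continuous_const continuous_norm).inter (isOpen_lt continuous_norm continuous_const)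

def simultaneousPairs {d : ℝ≥0∞} (D : CanonicalDomainSystem d) : Set ((ℂ × ℝ) × (ℂ × ℝ)) :=
  {q | q.1 ∈ vfDomain D ∧ q.2 ∈ vfDomain D ∧ q.1.2 = q.2.2}

namespace IsLoewnerChain

variable {d : ℝ≥0∞} {D : CanonicalDomainSystem d} {f : ℝ → ℂ → ℂ}

theorem tendstoUniformlyOn (hf : IsLoewnerChain d D f) (hd : 1 ≤ d) {t₀ : ℝ} (ht₀ : 0 ≤ t₀)
    {K : Set ℂ} (hK : IsCompact K) (hKt : K ⊆ stdAnnulus (D.r t₀)) :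
    TendstoUniformlyOn f (f t₀) (𝓝[Ici 0] t₀) K := by
  obtain ⟨S, ⟨hS0, hSt₀⟩, hKS, hSev⟩ :=
    exists_mem_Icc_eventually_le_of_eventually ht₀ (D.eventually_subset_stdAnnulus hd ht₀ hK hKt)
  have hST : S ≤ t₀ + 1 := by linarith
  obtain ⟨k, -, hk, hfk⟩ := hf.lc3 S (t₀ + 1) hS0 hST K hK hKS
  have hki : IntegrableOn k (Icc S (t₀ + 1)) := hk.integrable hd
  set P : ℝ → ℝ := fun x => ∫ ξ in S..x, k ξ
  have hP : ContinuousOn P (Icc S (t₀ + 1)) := by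
    rw [← uIcc_of_le hST]
    exact intervalIntegral.continuousOn_primitive_interval (by rwa [uIcc_of_le hST])
  have hPsub : ∀ a ∈ Icc S (t₀ + 1), ∀ b ∈ Icc S (t₀ + 1), ∫ ξ in a..b, k ξ = P b - P a :=
    fun a ha b hb => (intervalIntegral.integral_interval_sub_left
      (hki.mono_set (uIcc_subset_Icc (left_mem_Icc.mpr hST) hb)).intervalIntegrable
      (hki.mono_set (uIcc_subset_Icc (left_mem_Icc.mpr hST) ha)).intervalIntegrable).symm
  have hnear : ∀ᶠ s in 𝓝[Ici 0] t₀, s ∈ Icc S (t₀ + 1) :=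
    hSev.and ((eventually_nhdsWithin_of_eventually_nhds (gt_mem_nhds (lt_add_one t₀))).mono
      fun _ h => h.le)
  have hPt : Tendsto P (𝓝[Ici 0] t₀) (𝓝 (P t₀)) := (hP t₀ ⟨hSt₀, by linarith⟩).tendsto.comp
    (tendsto_nhdsWithin_iff.mpr ⟨tendsto_id.mono_left nhdsWithin_le_nhds, hnear⟩)
  have ht₀I : t₀ ∈ Icc S (t₀ + 1) := ⟨hSt₀, by linarith⟩
  rw [Metric.tendstoUniformlyOn_iff]
  intro ε hε
  filter_upwards [hnear, Metric.tendsto_nhds.mp hPt ε hε] with s hs hPs z hz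
  rw [Real.dist_eq] at hPs
  rw [dist_eq_norm]
  rcases le_total s t₀ with hst | hts
  · calc ‖f t₀ z - f s z‖ = ‖f s z - f t₀ z‖ := norm_sub_rev _ _
      _ ≤ ∫ ξ in s..t₀, k ξ := hfk z hz s t₀ hs.1 hst (by linarith)
      _ = -(P s - P t₀) := by rw [hPsub s hs t₀ ht₀I, neg_sub]
      _ < ε := (neg_le_abs _).trans_lt hPs
  · calc ‖f t₀ z - f s z‖ ≤ ∫ ξ in t₀..s, k ξ := hfk z hz t₀ s hSt₀ hts hs.2
      _ = P s - P t₀ := hPsub t₀ ht₀I s hs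
      _ < ε := (le_abs_self _).trans_lt hPs

theorem continuousOn_uncurry (hf : IsLoewnerChain d D f) (hd : 1 ≤ d) :
    ContinuousOn (fun p : ℂ × ℝ => f p.2 p.1) (vfDomain D) := by
  rintro ⟨z₀, t₀⟩ ⟨ht₀, hz₀⟩
  obtain ⟨ρ, hρ, hρD⟩ := nhds_basis_closedBall.mem_iff.mp ((isOpen_stdAnnulus _).mem_nhds hz₀)
  have hunif := hf.tendstoUniformlyOn hd ht₀ (isCompact_closedBall z₀ ρ) hρD
  have hsnd : Tendsto Prod.snd (𝓝[vfDomain D] (z₀, t₀)) (𝓝[Ici 0] t₀) :=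
    tendsto_nhdsWithin_iff.mpr
      ⟨continuous_snd.continuousWithinAt, eventually_nhdsWithin_of_forall fun p hp => hp.1⟩
  have hfst : Tendsto Prod.fst (𝓝[vfDomain D] (z₀, t₀)) (𝓝[closedBall z₀ ρ] z₀) :=
    tendsto_nhdsWithin_iff.mpr ⟨continuous_fst.continuousWithinAt,
      continuous_fst.continuousWithinAt.eventually (closedBall_mem_nhds z₀ hρ)⟩
  exact TendstoUniformlyOn.tendsto_comp (fun u hu => hsnd.eventually (hunif u hu))
    ((hf.holo t₀ ht₀).continuousOn.mono hρD z₀ (mem_closedBall_self hρ.le)) hfst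

theorem exists_eventually_mul_norm_sub_le (hf : IsLoewnerChain d D f) (hd : 1 ≤ d) {z₀ : ℂ}
    {t₀ : ℝ} (hp : (z₀, t₀) ∈ vfDomain D) :
    ∃ c > 0, ∃ ε > 0, ∀ᶠ s in 𝓝[Ici 0] t₀, ∀ z ∈ closedBall z₀ ε, ∀ ζ ∈ closedBall z₀ ε,
      c * ‖ζ - z‖ ≤ ‖f s ζ - f s z‖ := by
  obtain ⟨ht₀, hz₀⟩ := hp
  have hopen := isOpen_stdAnnulus (D.r t₀)
  obtain ⟨ρ, hρ, hρD⟩ := nhds_basis_closedBall.mem_iff.mp (hopen.mem_nhds hz₀)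
  have hunif : TendstoLocallyUniformlyOn f (f t₀) (𝓝[Ici 0] t₀) (ball z₀ ρ) :=
    ((hf.tendstoUniformlyOn hd ht₀ (isCompact_closedBall z₀ ρ) hρD).mono
      ball_subset_closedBall).tendstoLocallyUniformlyOn
  have hdiff : ∀ᶠ s in 𝓝[Ici 0] t₀, DifferentiableOn ℂ (f s) (ball z₀ ρ) := by
    filter_upwards [D.eventually_subset_stdAnnulus hd ht₀ (isCompact_closedBall z₀ ρ) hρD,
      self_mem_nhdsWithin] with s hs (hs0 : 0 ≤ s)
    exact (hf.holo s hs0).mono (ball_subset_closedBall.trans hs)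
  have hderiv : deriv (f t₀) z₀ ≠ 0 :=
    ((hf.holo t₀ ht₀).analyticAt (hopen.mem_nhds hz₀)).deriv_ne_zero_of_injOn
      (hopen.mem_nhds hz₀) (hf.inj t₀ ht₀)
  obtain ⟨ε, hε, hev⟩ := exists_eventually_mul_norm_sub_le_of_tendstoLocallyUniformlyOn hunif hdiff
    isOpen_ball (mem_ball_self hρ) hderiv
  exact ⟨_, by have := norm_pos_iff.mpr hderiv; positivity, ε, hε, hev⟩

theorem exists_eventually_norm_sub_le_mul (hf : IsLoewnerChain d D f) (hd : 1 ≤ d)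
    {q : (ℂ × ℝ) × (ℂ × ℝ)} (hq : q ∈ simultaneousPairs D) :
    ∃ c, ∀ᶠ q' in 𝓝[simultaneousPairs D] q,
      ‖q'.2.1 - q'.1.1‖ ≤ c * ‖f q'.2.2 q'.2.1 - f q'.1.2 q'.1.1‖ := by
  obtain ⟨⟨z, t⟩, ⟨ζ, t'⟩⟩ := q
  obtain ⟨hz, hζ, rfl : t = t'⟩ := hq
  rcases eq_or_ne z ζ with rfl | hzζ
  · obtain ⟨c, hc, ε, hε, hev⟩ := hf.exists_eventually_mul_norm_sub_le hd hz
    have htime :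
        Tendsto (fun q' => q'.1.2) (𝓝[simultaneousPairs D] ((z, t), (z, t))) (𝓝[Ici 0] t) :=
      tendsto_nhdsWithin_iff.mpr ⟨continuous_fst.snd.continuousWithinAt,
        eventually_nhdsWithin_of_forall fun q' hq' => hq'.1.1⟩
    refine ⟨c⁻¹, ?_⟩
    filter_upwards [htime.eventually hev,
      continuous_fst.fst.continuousWithinAt.eventually (closedBall_mem_nhds z hε),
      continuous_snd.fst.continuousWithinAt.eventually (closedBall_mem_nhds z hε),
      self_mem_nhdsWithin] with q' h h₁ h₂ hq'
    rw [← hq'.2.2, le_inv_mul_iff₀ hc]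
    exact h _ h₁ _ h₂
  · have hF := hf.continuousOn_uncurry hd
    have hB : ContinuousOn (fun q' : (ℂ × ℝ) × (ℂ × ℝ) => ‖f q'.2.2 q'.2.1 - f q'.1.2 q'.1.1‖)
        (simultaneousPairs D) :=
      ((hF.comp continuousOn_snd fun q' hq' => hq'.2.1).sub
        (hF.comp continuousOn_fst fun q' hq' => hq'.1)).norm
    set b := ‖f t ζ - f t z‖
    have hb : 0 < b :=
      norm_pos_iff.mpr (sub_ne_zero.mpr fun h => hzζ (hf.inj t hz.1 hz.2 hζ.2 h.symm))
    refine ⟨4 / b, ?_⟩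
    filter_upwards [(hB _ ⟨hz, hζ, rfl⟩).eventually_const_lt (half_lt_self hb),
      self_mem_nhdsWithin] with q' hBq hq'
    calc ‖q'.2.1 - q'.1.1‖ ≤ 2 := (norm_sub_le _ _).trans (by linarith [hq'.1.2.2, hq'.2.1.2.2])
      _ = 4 / b * (b / 2) := by field_simp; norm_num
      _ ≤ _ := by gcongr

end IsLoewnerChain

/-- Lemma 2.1: uniform reverse Lipschitz estimate for a Loewner chain on
compact subsets of `𝒟`. -/
theorem loewnerChain_reverse_lipschitz
    (d : ℝ≥0∞) (hd : 1 ≤ d) (D : CanonicalDomainSystem d) (f : ℝ → ℂ → ℂ)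
    (hf : IsLoewnerChain d D f)
    (K : Set (ℂ × ℝ)) (hK : IsCompact K) (hKD : K ⊆ vfDomain D) :
    ∃ M : ℝ, 0 < M ∧ ∀ z ζ : ℂ, ∀ t : ℝ, (z, t) ∈ K → (ζ, t) ∈ K →
      ‖ζ - z‖ ≤ M * ‖f t ζ - f t z‖ := by
  set C := K ×ˢ K ∩ {q : (ℂ × ℝ) × (ℂ × ℝ) | q.1.2 = q.2.2}
  have hC : IsCompact C :=
    (hK.prod hK).inter_right (isClosed_eq continuous_fst.snd continuous_snd.snd)
  have hCD : C ⊆ simultaneousPairs D := fun q ⟨⟨h₁, h₂⟩, h⟩ => ⟨hKD h₁, hKD h₂, h⟩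
  obtain ⟨M, hM, hCM⟩ := hC.exists_pos_forall_le_mul
    (A := fun q => ‖q.2.1 - q.1.1‖) (B := fun q => ‖f q.2.2 q.2.1 - f q.1.2 q.1.1‖)
    (fun _ _ => norm_nonneg _) fun q hq =>
      (hf.exists_eventually_norm_sub_le_mul hd (hCD hq)).imp fun _ hc => nhdsWithin_mono q hCD hc
  exact ⟨M, hM, fun z ζ t hz hζ => hCM ((z, t), (ζ, t)) ⟨⟨hz, hζ⟩, rfl⟩⟩
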